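/- Let ψ : [0,∞) → ℝ, c > 0 and 0 ≤ a < b < ∞. If χ : [0,∞) → ℝ satisfies sup_{t ∈ [a,b]} |χ(t) − ψ(t)| ≤ c/2, then TV(χ,[a,b]) ≥ TV^c(ψ,[a,b]), UTV(χ,[a,b]) ≥ UTV^c(ψ,[a,b]) and DTV(χ,[a,b]) ≥ DTV^c(ψ,[a,b]). -/
import Mathlib


open Filter Set Topology
open scoped ENNReal

/-- Sum of `f` over consecutive pairs of a finite sequence of points. -/
noncomputable def genVar (f : ℝ → ℝ → ℝ) (a b : ℝ) : ℝ≥0∞ :=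
  ⨆ (n : ℕ) (t : ℕ → ℝ)
    (_ : (∀ i, i < n → t i < t (i + 1)) ∧ a ≤ t 0 ∧ t n ≤ b),
    ENNReal.ofReal (∑ i ∈ Finset.range n, f (t i) (t (i + 1)))

noncomputable def TV (ψ : ℝ → ℝ) : ℝ → ℝ → ℝ≥0∞ :=
  genVar (fun s t => |ψ t - ψ s|)

noncomputable def UTV (ψ : ℝ → ℝ) : ℝ → ℝ → ℝ≥0∞ :=
  genVar (fun s t => max (ψ t - ψ s) 0)

noncomputable def DTV (ψ : ℝ → ℝ) : ℝ → ℝ → ℝ≥0∞ :=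
  genVar (fun s t => max (ψ s - ψ t) 0)

noncomputable def TVc (ψ : ℝ → ℝ) (c : ℝ) : ℝ → ℝ → ℝ≥0∞ :=
  genVar (fun s t => max (|ψ t - ψ s| - c) 0)

noncomputable def UTVc (ψ : ℝ → ℝ) (c : ℝ) : ℝ → ℝ → ℝ≥0∞ :=
  genVar (fun s t => max (ψ t - ψ s - c) 0)

noncomputable def DTVc (ψ : ℝ → ℝ) (c : ℝ) : ℝ → ℝ → ℝ≥0∞ :=
  genVar (fun s t => max (ψ s - ψ t - c) 0)

noncomputable def TVab (ψ α β : ℝ → ℝ) : ℝ → ℝ → ℝ≥0∞ :=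
  genVar (fun s t =>
    max (|(ψ t - (α t + β t) / 2) - (ψ s - (α s + β s) / 2)|
          - ((β t - α t) + (β s - α s)) / 2) 0)

noncomputable def UTVab (ψ α β : ℝ → ℝ) : ℝ → ℝ → ℝ≥0∞ :=
  genVar (fun s t =>
    max ((ψ t - (α t + β t) / 2) - (ψ s - (α s + β s) / 2)
          - ((β t - α t) + (β s - α s)) / 2) 0)

noncomputable def DTVab (ψ α β : ℝ → ℝ) : ℝ → ℝ → ℝ≥0∞ :=
  genVar (fun s t =>
    max ((ψ s - (α s + β s) / 2) - (ψ t - (α t + β t) / 2)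
          - ((β t - α t) + (β s - α s)) / 2) 0)

/-- Regulated on `[a,∞)`: right limits everywhere, left limits at points `> a`. -/
def Regulated (a : ℝ) (ψ : ℝ → ℝ) : Prop :=
  (∀ x, a ≤ x → ∃ L, Tendsto ψ (𝓝[>] x) (𝓝 L)) ∧
  (∀ x, a < x → ∃ L, Tendsto ψ (𝓝[<] x) (𝓝 L))

/-- Regulated on `[a,b]`. -/
def RegulatedOn (a b : ℝ) (ψ : ℝ → ℝ) : Prop :=
  (∀ x, a ≤ x → x < b → ∃ L, Tendsto ψ (𝓝[>] x) (𝓝 L)) ∧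
  (∀ x, a < x → x ≤ b → ∃ L, Tendsto ψ (𝓝[<] x) (𝓝 L))

lemma genVar_mono (f g : ℝ → ℝ → ℝ) (a b : ℝ)
    (h : ∀ s t, a ≤ s → s ≤ b → a ≤ t → t ≤ b → f s t ≤ g s t) :
    genVar f a b ≤ genVar g a b := by
  refine iSup_le fun n => iSup_le fun t => iSup_le fun ht => ?_
  obtain ⟨hlt, h0, hn⟩ := ht
  have hmono : ∀ i j, i ≤ j → j ≤ n → t i ≤ t j := by
    intro i j hij hjn
    induction j with
    | zero => simp_all
    | succ k ih =>
      rcases Nat.eq_or_lt_of_le hij with rfl | hij'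
      · exact le_rfl
      · exact le_trans (ih (Nat.lt_succ_iff.mp hij') (le_trans (Nat.le_succ k) hjn))
          (le_of_lt (hlt k (Nat.lt_of_succ_le hjn)))
  have hmem : ∀ i, i ≤ n → a ≤ t i ∧ t i ≤ b := fun i hi =>
    ⟨le_trans h0 (hmono 0 i (Nat.zero_le i) hi), le_trans (hmono i n hi le_rfl) hn⟩
  have hsum : ENNReal.ofReal (∑ i ∈ Finset.range n, f (t i) (t (i + 1))) ≤
      ENNReal.ofReal (∑ i ∈ Finset.range n, g (t i) (t (i + 1))) := by
    refine ENNReal.ofReal_le_ofReal (Finset.sum_le_sum fun i hi => ?_)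
    rw [Finset.mem_range] at hi
    obtain ⟨hi1, hi2⟩ := hmem i (le_of_lt hi)
    obtain ⟨hj1, hj2⟩ := hmem (i + 1) hi
    exact h _ _ hi1 hi2 hj1 hj2
  refine hsum.trans ?_
  rw [genVar]
  exact le_iSup_of_le n (le_iSup_of_le t (le_iSup_of_le ⟨hlt, h0, hn⟩ le_rfl))

/-- the truncated variations `TV^c`, `UTV^c`, `DTV^c` of `ψ`
are lower bounds for the corresponding variations of any function `χ`
uniformly `c/2`-close to `ψ` on `[a,b]`. -/
theorem stmt1 (ψ χ : ℝ → ℝ) (c : ℝ) (hc : 0 < c)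
    (a b : ℝ) (ha : 0 ≤ a) (hab : a < b)
    (hclose : ∀ t, a ≤ t → t ≤ b → |χ t - ψ t| ≤ c / 2) :
    TVc ψ c a b ≤ TV χ a b ∧
    UTVc ψ c a b ≤ UTV χ a b ∧
    DTVc ψ c a b ≤ DTV χ a b := by
  refine ⟨genVar_mono _ _ a b ?_, genVar_mono _ _ a b ?_, genVar_mono _ _ a b ?_⟩ <;>
  · intro s t hs1 hs2 ht1 ht2
    have h1 := hclose s hs1 hs2
    have h2 := hclose t ht1 ht2
    rw [abs_le] at h1 h2
    first
    | (refine max_le ?_ (abs_nonneg _)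
       rcases abs_cases (ψ t - ψ s) with ⟨he, _⟩ | ⟨he, _⟩
       · have := le_abs_self (χ t - χ s); linarith
       · have := neg_abs_le (χ t - χ s); linarith)
    | (refine max_le ?_ (le_max_right _ _)
       have := le_max_left (χ t - χ s) 0; linarith)
    | (refine max_le ?_ (le_max_right _ _)
       have := le_max_left (χ s - χ t) 0; linarith)
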